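/- Fix θ₀ ∈ (0, π]. A mixed graph G is bipartite if and only if there exists ε > 0 such that G has the θ-symmetric spectrum for every θ ∈ (θ₀ − ε, θ₀ + ε). -/

import Mathlib

open Polynomial Matrix Real

/-- The θ-Hermitian adjacency matrix of a mixed graph on `Fin n` with arc
relation `A` (no loops). -/
noncomputable def MGHerm {n : ℕ} (A : Fin n → Fin n → Bool) (θ : ℝ) : Matrix (Fin n) (Fin n) ℂ :=
  fun x y =>
    if A x y ∧ A y x then 1
    else if A x y then Complex.exp (θ * Complex.I)
    else if A y x then Complex.exp (-θ * Complex.I)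
    else 0

/-- A mixed graph is bipartite if its underlying graph is bipartite. -/
def MGBipartite {n : ℕ} (A : Fin n → Fin n → Bool) : Prop :=
  ∃ S : Set (Fin n), ∀ x y : Fin n, (A x y ∨ A y x) → (x ∈ S ↔ y ∉ S)

/-- The spectrum of `M` (as a root multiset of its characteristic polynomial)
is symmetric with respect to the origin, with multiplicities. -/
def SymSpec {n : ℕ} (M : Matrix (Fin n) (Fin n) ℂ) : Prop :=
  ∀ μ : ℂ, M.charpoly.rootMultiplicity μ = M.charpoly.rootMultiplicity (-μ)

/-
If `S` splits the vertices, conjugating `H_θ` by the diagonal matrix of signs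
`±1` according to membership in `S` gives `-H_θ`, so the spectrum is symmetric.
Conversely, a symmetric spectrum makes the trace of every odd power of the Hermitian matrix
`H_θ` vanish. Since `e^{iθ} H_θ` is a polynomial matrix `P` in `e^{iθ}`, `tr P^k` is a
polynomial vanishing on an arc of the unit circle, hence identically zero. At `1`, however,
`P` is the adjacency matrix of the underlying graph, and `tr P^k` counts its closed walks of
length `k`, of which there is one for some odd `k` when the graph is not bipartite.
-/

namespace Matrix

variable {n : Type*} [Fintype n] [DecidableEq n]

lemma trace_pow_map {R S : Type*} [Semiring R] [Semiring S] (f : R →+* S) (M : Matrix n n R)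
    (k : ℕ) : (M.map f ^ k).trace = f (M ^ k).trace := by
  rw [AddMonoidHom.map_trace, ← RingHom.mapMatrix_apply, ← RingHom.mapMatrix_apply, map_pow]

lemma charpoly_neg {R : Type*} [CommRing R] (M : Matrix n n R) :
    (-M).charpoly = (-1) ^ Fintype.card n * M.charpoly.comp (-X) := by
  have h : (charmatrix M).map (compRingHom (-X)) = -charmatrix (-M) := by
    ext i j : 1
    by_cases h : i = j
    · simp [h]; ring
    · simp [h]
  rw [charpoly, charpoly, ← coe_compRingHom_apply, RingHom.map_det, RingHom.mapMatrix_apply, h,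
    det_neg, ← mul_assoc, ← mul_pow]
  simp

lemma roots_charpoly_neg {K : Type*} [Field K] (M : Matrix n n K) :
    (-M).charpoly.roots = M.charpoly.roots.map Neg.neg := by
  rw [charpoly_neg, ← C_1, ← C_neg, ← C_pow,
    roots_C_mul _ (pow_ne_zero _ (neg_ne_zero.2 one_ne_zero)), roots_comp_neg_X]

lemma charpoly_neg_eq_of_bipartite_support {R : Type*} [CommRing R] {M : Matrix n n R}
    (S : Set n) [DecidablePred (· ∈ S)] (hS : ∀ x y, M x y ≠ 0 → (x ∈ S ↔ y ∉ S)) :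
    (-M).charpoly = M.charpoly := by
  set D : Matrix n n R := diagonal fun v => if v ∈ S then 1 else -1
  have hD : D * D = 1 := by
    rw [diagonal_mul_diagonal, ← diagonal_one]
    congr 1
    ext v
    split_ifs <;> simp
  have hconj : D * M * D = -M := by
    ext x y
    rw [mul_diagonal, diagonal_mul, neg_apply]
    by_cases hxy : M x y = 0
    · simp [hxy]
    · have hsides := hS x y hxy
      by_cases hx : x ∈ S <;> simp_all
  rw [← hconj, charpoly_mul_comm, ← mul_assoc, hD, one_mul]

lemma IsHermitian.trace_pow_eq_sum_roots_charpoly {A : Matrix n n ℂ} (hA : A.IsHermitian)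
    (k : ℕ) : (A ^ k).trace = (A.charpoly.roots.map (· ^ k)).sum := by
  rw [← cfc_pow_id (R := ℝ) A k hA.isSelfAdjoint, trace_eq_sum_roots_charpoly,
    hA.charpoly_cfc_eq, roots_prod _ _ (Finset.prod_ne_zero_iff.2 fun i _ => X_sub_C_ne_zero _),
    hA.roots_charpoly_eq_eigenvalues]
  simp only [roots_X_sub_C]
  simp

end Matrix

lemma Multiset.sum_map_pow_eq_zero_of_map_neg {K : Type*} [Ring K] [NoZeroDivisors K]
    [CharZero K] {s : Multiset K} (hs : s.map Neg.neg = s) {k : ℕ} (hk : Odd k) :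
    (s.map (· ^ k)).sum = 0 := by
  have h : (s.map (· ^ k)).sum = -(s.map (· ^ k)).sum := by
    conv_lhs => rw [← hs]
    simp [Multiset.map_map, hk.neg_pow, Multiset.sum_map_neg]
  exact self_eq_neg.1 h

lemma Polynomial.eq_zero_of_forall_eval_exp_mul_I_eq_zero {p : ℂ[X]} {a b : ℝ} (hab : a < b)
    (h : ∀ θ ∈ Set.Ioo a b, p.eval (Complex.exp (θ * Complex.I)) = 0) : p = 0 := by
  set c := min b (a + 2 * π)
  have hac : a < c := lt_min hab (by linarith [pi_pos])
  have hinj : (Set.Ioo a c).InjOn (circleMap 0 1) :=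
    (injOn_circleMap_of_abs_sub_le' one_ne_zero (by linarith [min_le_right b (a + 2 * π)])).mono
      Set.Ioo_subset_Ico_self
  refine eq_zero_of_infinite_isRoot p (((Set.Ioo_infinite hac).image hinj).mono ?_)
  rintro _ ⟨θ, hθ, rfl⟩
  simpa [circleMap] using h θ ⟨hθ.1, hθ.2.trans_le (min_le_left _ _)⟩

namespace SimpleGraph

variable {V : Type*} [Fintype V] [DecidableEq V] {G : SimpleGraph V} [DecidableRel G.Adj]

lemma trace_adjMatrix_pow_length_ne_zero {R : Type*} [Semiring R] [CharZero R] {u : V}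
    (p : G.Walk u u) : (G.adjMatrix R ^ p.length).trace ≠ 0 := by
  simp only [trace, diag, adjMatrix_pow_apply_eq_card_walk]
  rw [← Nat.cast_sum, Nat.cast_ne_zero]
  exact (Finset.sum_pos' (fun _ _ => Nat.zero_le _)
    ⟨u, Finset.mem_univ u, Fintype.card_pos_iff.2 ⟨⟨p, rfl⟩⟩⟩).ne'

end SimpleGraph

lemma symSpec_iff_map_neg_roots {n : ℕ} (M : Matrix (Fin n) (Fin n) ℂ) :
    SymSpec M ↔ M.charpoly.roots.map Neg.neg = M.charpoly.roots := by
  simp only [SymSpec, Multiset.ext, ← count_roots]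
  refine forall_congr' fun μ => ?_
  rw [← neg_neg μ, Multiset.count_map_eq_count' _ _ neg_injective, neg_neg, eq_comm]

lemma symSpec_of_charpoly_neg_eq {n : ℕ} {M : Matrix (Fin n) (Fin n) ℂ}
    (h : (-M).charpoly = M.charpoly) : SymSpec M := by
  rw [symSpec_iff_map_neg_roots, ← roots_charpoly_neg, h]

lemma trace_pow_eq_zero_of_symSpec {n : ℕ} {M : Matrix (Fin n) (Fin n) ℂ} (hM : M.IsHermitian)
    (hs : SymSpec M) {k : ℕ} (hk : Odd k) : (M ^ k).trace = 0 := by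
  rw [hM.trace_pow_eq_sum_roots_charpoly]
  exact Multiset.sum_map_pow_eq_zero_of_map_neg ((symSpec_iff_map_neg_roots M).1 hs) hk

section MixedGraph

variable {n : ℕ} (A : Fin n → Fin n → Bool)

def underlyingGraph : SimpleGraph (Fin n) := SimpleGraph.fromRel fun x y => A x y

instance : DecidableRel (underlyingGraph A).Adj := fun x y =>
  inferInstanceAs (Decidable (x ≠ y ∧ (A x y ∨ A y x)))

/-- `X • H_θ` as a polynomial matrix in `X = e^{iθ}`. -/
noncomputable def MGHermPoly : Matrix (Fin n) (Fin n) ℂ[X] :=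
  fun x y => if A x y ∧ A y x then X else if A x y then X ^ 2 else if A y x then 1 else 0

lemma mgHerm_isHermitian (θ : ℝ) : (MGHerm A θ).IsHermitian := by
  ext x y
  simp only [conjTranspose_apply, MGHerm]
  by_cases h1 : A y x <;> by_cases h2 : A x y <;> simp [h1, h2, ← Complex.exp_conj]

lemma map_eval_exp_mgHermPoly (θ : ℝ) :
    (MGHermPoly A).map (eval (Complex.exp (θ * Complex.I)))
      = Complex.exp (θ * Complex.I) • MGHerm A θ := by
  ext x y
  simp only [map_apply, MGHermPoly, MGHerm, Matrix.smul_apply, smul_eq_mul]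
  split_ifs <;> simp [sq, ← Complex.exp_add]

variable {A}

lemma map_eval_one_mgHermPoly (hA : ∀ v, A v v = false) :
    (MGHermPoly A).map (eval 1) = (underlyingGraph A).adjMatrix ℂ := by
  ext x y
  rw [map_apply, SimpleGraph.adjMatrix_apply]
  by_cases hxy : x = y
  · subst hxy; simp [MGHermPoly, underlyingGraph, hA]
  · by_cases h1 : A x y <;> by_cases h2 : A y x <;> simp [MGHermPoly, underlyingGraph, hxy, h1, h2]

lemma mgBipartite_of_colorable (hA : ∀ v, A v v = false) (h : (underlyingGraph A).Colorable 2) :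
    MGBipartite A := by
  obtain ⟨c⟩ := h
  refine ⟨{v | c v = 0}, fun x y hxy => ?_⟩
  have hne : c x ≠ c y := c.valid ⟨by rintro rfl; simp_all, hxy⟩
  change c x = 0 ↔ ¬c y = 0
  omega

lemma symSpec_mgHerm_of_mgBipartite (hb : MGBipartite A) (θ : ℝ) : SymSpec (MGHerm A θ) := by
  classical
  obtain ⟨S, hS⟩ := hb
  refine symSpec_of_charpoly_neg_eq (charpoly_neg_eq_of_bipartite_support S fun x y hxy => ?_)
  refine hS x y (by_contra fun hnadj => hxy ?_)
  simp_all [MGHerm]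

lemma mgBipartite_of_forall_symSpec_mgHerm (hA : ∀ v, A v v = false) {a b : ℝ} (hab : a < b)
    (h : ∀ θ ∈ Set.Ioo a b, SymSpec (MGHerm A θ)) : MGBipartite A := by
  by_contra hnb
  obtain ⟨u, p, hp⟩ : ∃ u, ∃ p : (underlyingGraph A).Walk u u, Odd p.length := by
    simpa [SimpleGraph.two_colorable_iff_forall_loop_even] using
      mt (mgBipartite_of_colorable hA) hnb
  have htrace : (MGHermPoly A ^ p.length).trace = 0 := by
    refine eq_zero_of_forall_eval_exp_mul_I_eq_zero hab fun θ hθ => ?_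
    rw [← coe_evalRingHom, ← trace_pow_map, coe_evalRingHom, map_eval_exp_mgHermPoly,
      _root_.smul_pow, trace_smul,
      trace_pow_eq_zero_of_symSpec (mgHerm_isHermitian A θ) (h θ hθ) hp, smul_zero]
  apply (underlyingGraph A).trace_adjMatrix_pow_length_ne_zero (R := ℂ) p
  rw [← map_eval_one_mgHermPoly hA, ← coe_evalRingHom, trace_pow_map, htrace, map_zero]

end MixedGraph

theorem bipartite_iff_persistent_symmetric_spectrum_general (θ₀ : ℝ)
    {n : ℕ} (A : Fin n → Fin n → Bool)
    (hA : ∀ v, A v v = false) :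
    MGBipartite A ↔
      ∃ ε > (0 : ℝ), ∀ θ ∈ Set.Ioo (θ₀ - ε) (θ₀ + ε), SymSpec (MGHerm A θ) := by
  constructor
  · exact fun hb => ⟨1, one_pos, fun θ _ => symSpec_mgHerm_of_mgBipartite hb θ⟩
  · rintro ⟨ε, hε, h⟩
    exact mgBipartite_of_forall_symSpec_mgHerm hA (by linarith) h

theorem bipartite_iff_persistent_symmetric_spectrum (θ₀ : ℝ)
    (hθ₀ : θ₀ ∈ Set.Ioc (0 : ℝ) Real.pi) {n : ℕ} (A : Fin n → Fin n → Bool)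
    (hA : ∀ v, A v v = false) :
    MGBipartite A ↔
      ∃ ε > (0 : ℝ), ∀ θ ∈ Set.Ioo (θ₀ - ε) (θ₀ + ε), SymSpec (MGHerm A θ) :=
  bipartite_iff_persistent_symmetric_spectrum_general θ₀ A hA
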